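/- Let e : [0, ∞) → ℝ be continuous with e(0) ∈ (-k_a, k_b) for positive constants k_a, k_b, and suppose V(t) := (1/2) ln(k_b²/(k_b² - e(t)²)) when e(t) ≥ 0 and (1/2) ln(k_a²/(k_a² - e(t)²)) when e(t) < 0 is well-defined and bounded above by V(0) for all t in the maximal interval where e(t) ∈ (-k_a, k_b). Then e(t) ∈ (-k_a, k_b) for all t ≥ 0. -/
import Mathlib

lemma barrier_aux (k x C ε : ℝ) (hk : 0 < k) (hx2 : x ^ 2 < k ^ 2)
    (hε : ε ≤ k ^ 2 * Real.exp (-(2 * C)))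
    (hlog : (1 / 2) * Real.log (k ^ 2 / (k ^ 2 - x ^ 2)) ≤ C) : x ^ 2 ≤ k ^ 2 - ε := by
  have hd : 0 < k ^ 2 - x ^ 2 := by linarith
  have hpos : 0 < k ^ 2 / (k ^ 2 - x ^ 2) := div_pos (by positivity) hd
  have h1 : Real.log (k ^ 2 / (k ^ 2 - x ^ 2)) ≤ 2 * C := by linarith
  have h2 : k ^ 2 / (k ^ 2 - x ^ 2) ≤ Real.exp (2 * C) :=
    (Real.log_le_iff_le_exp hpos).mp h1
  have h3 : k ^ 2 ≤ (k ^ 2 - x ^ 2) * Real.exp (2 * C) := by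
    rw [div_le_iff₀ hd] at h2; linarith
  have h4 : k ^ 2 / Real.exp (2 * C) ≤ k ^ 2 - x ^ 2 :=
    (div_le_iff₀ (Real.exp_pos (2 * C))).mpr h3
  have h5 : k ^ 2 * Real.exp (-(2 * C)) = k ^ 2 / Real.exp (2 * C) := by
    rw [Real.exp_neg, div_eq_mul_inv]
  linarith

theorem barrier_invariance (k_a k_b : ℝ) (hka : 0 < k_a) (hkb : 0 < k_b)
    (e : ℝ → ℝ) (hcont : ContinuousOn e (Set.Ici 0))
    (h0 : e 0 ∈ Set.Ioo (-k_a) k_b)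
    (V : ℝ → ℝ)
    (hV : V = fun x => if 0 ≤ x then (1 / 2) * Real.log (k_b ^ 2 / (k_b ^ 2 - x ^ 2))
                       else (1 / 2) * Real.log (k_a ^ 2 / (k_a ^ 2 - x ^ 2)))
    (hbound : ∀ t ≥ (0 : ℝ), (∀ s ∈ Set.Icc (0 : ℝ) t, e s ∈ Set.Ioo (-k_a) k_b) →
      V (e t) ≤ V (e 0)) :
    ∀ t ≥ (0 : ℝ), e t ∈ Set.Ioo (-k_a) k_b := by
  set C := V (e 0) with hC
  -- C ≥ 0
  have hC0 : 0 ≤ C := by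
    rw [hC, hV]
    simp only
    obtain ⟨h0l, h0r⟩ := h0
    split_ifs with h
    · have hd : 0 < k_b ^ 2 - (e 0) ^ 2 := by nlinarith
      have : (1 : ℝ) ≤ k_b ^ 2 / (k_b ^ 2 - (e 0) ^ 2) := by
        rw [le_div_iff₀ hd]; nlinarith
      have := Real.log_nonneg this
      linarith
    · push_neg at h
      have hd : 0 < k_a ^ 2 - (e 0) ^ 2 := by nlinarith
      have : (1 : ℝ) ≤ k_a ^ 2 / (k_a ^ 2 - (e 0) ^ 2) := by
        rw [le_div_iff₀ hd]; nlinarith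
      have := Real.log_nonneg this
      linarith
  set ε := min (k_a ^ 2) (k_b ^ 2) * Real.exp (-(2 * C)) with hεdef
  have hεpos : 0 < ε := by positivity
  have hεa : ε ≤ k_a ^ 2 := by
    calc ε ≤ min (k_a ^ 2) (k_b ^ 2) * 1 := by
            apply mul_le_mul_of_nonneg_left (Real.exp_le_one_iff.mpr (by linarith))
            positivity
      _ ≤ k_a ^ 2 := by rw [mul_one]; exact min_le_left _ _
  have hεb : ε ≤ k_b ^ 2 := by
    calc ε ≤ min (k_a ^ 2) (k_b ^ 2) * 1 := by
            apply mul_le_mul_of_nonneg_left (Real.exp_le_one_iff.mpr (by linarith))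
            positivity
      _ ≤ k_b ^ 2 := by rw [mul_one]; exact min_le_right _ _
  -- key pointwise lemma
  have hmem : ∀ x ∈ Set.Ioo (-k_a) k_b, V x ≤ C →
      x ∈ Set.Icc (-Real.sqrt (k_a ^ 2 - ε)) (Real.sqrt (k_b ^ 2 - ε)) := by
    intro x hx hVx
    obtain ⟨hxl, hxr⟩ := hx
    rw [hV] at hVx
    simp only at hVx
    split_ifs at hVx with hsx
    · have hx2 : x ^ 2 < k_b ^ 2 := by nlinarith
      have hεle : ε ≤ k_b ^ 2 * Real.exp (-(2 * C)) := by
        apply mul_le_mul_of_nonneg_right (min_le_right _ _) (Real.exp_pos _).le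
      have key := barrier_aux k_b x C ε hkb hx2 hεle hVx
      constructor
      · have : (0:ℝ) ≤ Real.sqrt (k_a ^ 2 - ε) := Real.sqrt_nonneg _
        linarith
      · have hnn : (0:ℝ) ≤ k_b ^ 2 - ε := by nlinarith [sq_nonneg x]
        exact (Real.le_sqrt hsx hnn).mpr key
    · push_neg at hsx
      have hx2 : x ^ 2 < k_a ^ 2 := by nlinarith
      have hεle : ε ≤ k_a ^ 2 * Real.exp (-(2 * C)) := by
        apply mul_le_mul_of_nonneg_right (min_le_left _ _) (Real.exp_pos _).le
      have key := barrier_aux k_a x C ε hka hx2 hεle hVx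
      constructor
      · have h1 : -x ≤ Real.sqrt (k_a ^ 2 - ε) := by
          have hnn : (0:ℝ) ≤ k_a ^ 2 - ε := by nlinarith [sq_nonneg x]
          exact (Real.le_sqrt (by linarith) hnn).mpr (by nlinarith)
        linarith
      · have : (0:ℝ) ≤ Real.sqrt (k_b ^ 2 - ε) := Real.sqrt_nonneg _
        linarith
  by_contra hcon
  push_neg at hcon
  obtain ⟨t₀, ht₀, ht₀n⟩ := hcon
  set A : Set ℝ := {t | 0 ≤ t ∧ e t ∉ Set.Ioo (-k_a) k_b} with hA
  have hAc : IsClosed A := by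
    have : A = Set.Ici 0 ∩ e ⁻¹' (Set.Ioo (-k_a) k_b)ᶜ := by
      ext t; simp [hA, Set.mem_Ici]
    rw [this]
    exact hcont.preimage_isClosed_of_isClosed isClosed_Ici isOpen_Ioo.isClosed_compl
  have hAne : A.Nonempty := ⟨t₀, ht₀, ht₀n⟩
  have hAbdd : BddBelow A := ⟨0, fun t ht => ht.1⟩
  set τ := sInf A with hτ
  have hτA : τ ∈ A := hAc.csInf_mem hAne hAbdd
  have hτ0 : 0 ≤ τ := hτA.1
  have hτpos : 0 < τ := by
    rcases lt_or_eq_of_le hτ0 with h | h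
    · exact h
    · exact absurd h0 (h ▸ hτA.2)
  have hIoo : ∀ s ∈ Set.Ico (0:ℝ) τ, e s ∈ Set.Ioo (-k_a) k_b := by
    intro s hs
    by_contra hn
    exact absurd (csInf_le hAbdd ⟨hs.1, hn⟩) (not_le.mpr hs.2)
  have hbd : ∀ s ∈ Set.Ico (0:ℝ) τ,
      e s ∈ Set.Icc (-Real.sqrt (k_a ^ 2 - ε)) (Real.sqrt (k_b ^ 2 - ε)) := by
    intro s hs
    exact hmem _ (hIoo s hs)
      (hbound s hs.1 (fun u hu => hIoo u ⟨hu.1, lt_of_le_of_lt hu.2 hs.2⟩))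
  have hct : Filter.Tendsto e (nhdsWithin τ (Set.Ico 0 τ)) (nhds (e τ)) :=
    (hcont τ hτ0).mono Set.Ico_subset_Ici_self
  have hne : (nhdsWithin τ (Set.Ico 0 τ)).NeBot := by
    apply mem_closure_iff_nhdsWithin_neBot.mp
    rw [closure_Ico hτpos.ne]
    exact Set.right_mem_Icc.mpr hτ0
  have heτ : e τ ∈ Set.Icc (-Real.sqrt (k_a ^ 2 - ε)) (Real.sqrt (k_b ^ 2 - ε)) :=
    isClosed_Icc.mem_of_tendsto hct (eventually_mem_nhdsWithin.mono hbd)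
  have hsa : Real.sqrt (k_a ^ 2 - ε) < k_a := by
    calc Real.sqrt (k_a ^ 2 - ε) < Real.sqrt (k_a ^ 2) :=
          Real.sqrt_lt_sqrt (by linarith) (by linarith)
      _ = k_a := Real.sqrt_sq hka.le
  have hsb : Real.sqrt (k_b ^ 2 - ε) < k_b := by
    calc Real.sqrt (k_b ^ 2 - ε) < Real.sqrt (k_b ^ 2) :=
          Real.sqrt_lt_sqrt (by linarith) (by linarith)
      _ = k_b := Real.sqrt_sq hkb.le
  exact hτA.2 ⟨by linarith [heτ.1], lt_of_le_of_lt heτ.2 hsb⟩
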